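/- arXiv:2109.10116 — 3 statements merged into one kernel-verified Lean document; each statement's English description precedes it below -/
import Mathlib

section
/- Let a_1,...,a_n be real numbers and λ ≥ 0. Then the Lebesgue measure of the set {x ∈ [0,1] : |Σ_{j=1}^n a_j r_j(x)| > λ (Σ_{j=1}^n a_j²)^{1/2}} is at most 2e^{-λ²/2}, where r_j is the j-th Rademacher function. -/
open Real MeasureTheory

/-- Sup norm of `f` on `[0, 2π]`. -/
noncomputable def supNorm (f : ℝ → ℝ) : ℝ := ⨆ x : Set.Icc (0:ℝ) (2*π), |f (x : ℝ)|

/-- L¹ norm of `f` on `(0, 2π)`. -/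
noncomputable def l1Norm (f : ℝ → ℝ) : ℝ := ∫ x in (0:ℝ)..(2*π), |f x|

/-- `f` is a real trigonometric polynomial of degree at most `r`. -/
def IsTrigPoly (r : ℝ) (f : ℝ → ℝ) : Prop :=
  ∃ (A : ℝ) (a b : ℕ → ℝ), f = fun x =>
    A + ∑ k ∈ Finset.Icc 1 ⌊r⌋₊, (a k * Real.cos ((k:ℝ) * x) + b k * Real.sin ((k:ℝ) * x))

/-- The `n`-th Rademacher function. -/
noncomputable def rademacher (n : ℕ) (x : ℝ) : ℝ := Real.sign (Real.sin (2^n * π * x))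

noncomputable def aCoeff (f : ℝ → ℝ) (k : ℕ) : ℝ :=
  (1/π) * ∫ x in (0:ℝ)..(2*π), f x * Real.cos ((k:ℝ)*x)

noncomputable def bCoeff (f : ℝ → ℝ) (k : ℕ) : ℝ :=
  (1/π) * ∫ x in (0:ℝ)..(2*π), f x * Real.sin ((k:ℝ)*x)

/-- The `n`-th dyadic block of the Fourier series of `f`. -/
noncomputable def delta (f : ℝ → ℝ) (n : ℕ) (x : ℝ) : ℝ :=
  if n = 0 then aCoeff f 0 / 2
  else ∑ k ∈ Finset.Ico (2^(n-1)) (2^n),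
    (aCoeff f k * Real.cos ((k:ℝ)*x) + bCoeff f k * Real.sin ((k:ℝ)*x))

/-- The QC-norm of Kashin and Temlyakov. -/
noncomputable def qcNorm (f : ℝ → ℝ) : ℝ :=
  ∫ ω in (0:ℝ)..1, supNorm (fun x => ∑' n : ℕ, rademacher n ω * delta f n x)

/-! Self-similarity makes the Rademacher functions behave like independent signs: `r₁` is `1`
on `(0, 1/2)` and `-1` on `(1/2, 1)`, and `r_{j+1} x = r_j (2 x)`. Splitting `[0, 1]` in halves
and inducting gives `∫₀¹ exp (∑ c_j r_j) = ∏ cosh c_j ≤ exp (∑ c_j² / 2)`, i.e. a Rademacher sum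
has a sub-Gaussian moment generating function with variance proxy `∑ a_j²`. The Chernoff bound
for `S` and `-S` then gives the two-sided tail `2 exp (-λ² / 2)`. -/

open ProbabilityTheory Function Finset
open scoped NNReal

lemma sum_Icc_one_eq_sum_range {M : Type*} [AddCommMonoid M] (f : ℕ → M) (n : ℕ) :
    ∑ j ∈ Icc 1 n, f j = ∑ j ∈ range n, f (j + 1) := by
  rw [range_eq_Ico, sum_Ico_add' f 0 n 1, zero_add, Ico_add_one_right_eq_Icc]

lemma measurable_rademacher (n : ℕ) : Measurable (rademacher n) := by
  unfold rademacher Real.sign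
  have h : Measurable fun x : ℝ => Real.sin (2 ^ n * π * x) := by fun_prop
  exact Measurable.ite (measurableSet_lt h measurable_const) measurable_const
    (Measurable.ite (measurableSet_lt measurable_const h) measurable_const measurable_const)

lemma abs_rademacher_le_one (n : ℕ) (x : ℝ) : |rademacher n x| ≤ 1 := by
  rcases Real.sign_apply_eq (Real.sin (2 ^ n * π * x)) with h | h | h <;>
    simp [rademacher, h]

lemma rademacher_succ (n : ℕ) (x : ℝ) : rademacher (n + 1) x = rademacher n (2 * x) := by
  unfold rademacher; ring_nf

lemma rademacher_succ_periodic (n : ℕ) : Periodic (rademacher (n + 1)) 1 := by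
  intro x
  have : 2 ^ (n + 1) * π * (x + 1) = 2 ^ (n + 1) * π * x + (2 ^ n : ℤ) * (2 * π) := by
    push_cast; ring
  rw [rademacher, rademacher, this, Real.sin_add_int_mul_two_pi]

lemma rademacher_one_eq_one_of_mem_Ioo {x : ℝ} (hx : x ∈ Set.Ioo 0 (1 / 2)) :
    rademacher 1 x = 1 := by
  have : 0 < Real.sin (2 ^ 1 * π * x) :=
    Real.sin_pos_of_pos_of_lt_pi (by nlinarith [pi_pos, hx.1]) (by nlinarith [pi_pos, hx.2])
  rw [rademacher, Real.sign_of_pos this]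

lemma rademacher_one_eq_neg_one_of_mem_Ioo {x : ℝ} (hx : x ∈ Set.Ioo (1 / 2) 1) :
    rademacher 1 x = -1 := by
  have : Real.sin (2 ^ 1 * π * x) < 0 := by
    rw [show 2 ^ 1 * π * x = (2 * π * x - π) + π by ring, Real.sin_add_pi, neg_neg_iff_pos]
    exact Real.sin_pos_of_pos_of_lt_pi (by nlinarith [pi_pos, hx.1]) (by nlinarith [pi_pos, hx.2])
  rw [rademacher, Real.sign_of_neg this]

lemma integral_comp_rademacher_one_mul_comp_two_mul (φ : ℝ → ℝ) {g : ℝ → ℝ}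
    (hg : Periodic g 1) (hgi : IntervalIntegrable g volume 0 1) :
    ∫ x in (0:ℝ)..1, φ (rademacher 1 x) * g (2 * x) =
      (φ 1 + φ (-1)) / 2 * ∫ x in (0:ℝ)..1, g x := by
  have hg2 (a b : ℝ) : IntervalIntegrable (fun x => g (2 * x)) volume a b := by
    simpa using (hg.intervalIntegrable₀ one_ne_zero hgi (2 * a) (2 * b)).comp_mul_left (c := 2)
  have hleft : Set.EqOn (fun x => φ (rademacher 1 x) * g (2 * x)) (fun x => φ 1 * g (2 * x))
      (Set.uIoo 0 (1 / 2)) := by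
    intro x hx
    rw [Set.uIoo_of_le (by norm_num)] at hx
    simp only [rademacher_one_eq_one_of_mem_Ioo hx]
  have hright : Set.EqOn (fun x => φ (rademacher 1 x) * g (2 * x)) (fun x => φ (-1) * g (2 * x))
      (Set.uIoo (1 / 2) 1) := by
    intro x hx
    rw [Set.uIoo_of_le (by norm_num)] at hx
    simp only [rademacher_one_eq_neg_one_of_mem_Ioo hx]
  rw [← intervalIntegral.integral_add_adjacent_intervals
      (((hg2 0 (1 / 2)).const_mul (φ 1)).congr_uIoo hleft.symm)
      (((hg2 (1 / 2) 1).const_mul (φ (-1))).congr_uIoo hright.symm),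
    intervalIntegral.integral_congr_uIoo hleft, intervalIntegral.integral_congr_uIoo hright,
    intervalIntegral.integral_const_mul, intervalIntegral.integral_const_mul,
    intervalIntegral.integral_comp_mul_left g two_ne_zero,
    intervalIntegral.integral_comp_mul_left g two_ne_zero]
  have hshift : ∫ x in (1:ℝ)..2, g x = ∫ x in (0:ℝ)..1, g x := by
    simpa [one_add_one_eq_two] using hg.intervalIntegral_add_eq 1 0
  norm_num [hshift]
  ring

lemma abs_sum_mul_rademacher_le {ι : Type*} (s : Finset ι) (c : ι → ℝ) (k : ι → ℕ) (x : ℝ) :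
    |∑ j ∈ s, c j * rademacher (k j) x| ≤ ∑ j ∈ s, |c j| :=
  (abs_sum_le_sum_abs _ _).trans <| sum_le_sum fun j _ => by
    rw [abs_mul]; exact mul_le_of_le_one_right (abs_nonneg _) (abs_rademacher_le_one _ _)

lemma integrable_exp_sum_mul_rademacher {ι : Type*} {μ : Measure ℝ} [IsFiniteMeasure μ]
    (s : Finset ι) (c : ι → ℝ) (k : ι → ℕ) :
    Integrable (fun x => exp (∑ j ∈ s, c j * rademacher (k j) x)) μ := by
  refine .of_bound ?_ (exp (∑ j ∈ s, |c j|)) (ae_of_all _ fun x => ?_)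
  · have := fun j => measurable_rademacher (k j)
    fun_prop
  · rw [norm_eq_abs, abs_exp, exp_le_exp]
    exact (le_abs_self _).trans (abs_sum_mul_rademacher_le s c k x)

theorem integral_exp_sum_mul_rademacher (n : ℕ) (c : ℕ → ℝ) :
    ∫ x in (0:ℝ)..1, exp (∑ j ∈ range n, c j * rademacher (j + 1) x) =
      ∏ j ∈ range n, cosh (c j) := by
  induction n generalizing c with
  | zero => simp
  | succ n ih =>
    set g := fun y => exp (∑ j ∈ range n, c (j + 1) * rademacher (j + 1) y)
    have hg : Periodic g 1 := fun x => by simp only [g, rademacher_succ_periodic _ x]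
    have hgi : IntervalIntegrable g volume 0 1 :=
      (intervalIntegrable_iff_integrableOn_Ioc_of_le zero_le_one).2
        (integrable_exp_sum_mul_rademacher _ _ _)
    have hsplit (x : ℝ) : exp (∑ j ∈ range (n + 1), c j * rademacher (j + 1) x) =
        exp (c 0 * rademacher 1 x) * g (2 * x) := by
      simp only [g, sum_range_succ', rademacher_succ _ x, exp_add, mul_comm]
    have hhalves :=
      integral_comp_rademacher_one_mul_comp_two_mul (fun s => exp (c 0 * s)) hg hgi
    simp_rw [hsplit]
    rw [hhalves, ih, prod_range_succ', cosh_eq, mul_one, mul_neg_one, mul_comm]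

lemma hasSubgaussianMGF_sum_mul_rademacher (n : ℕ) (c : ℕ → ℝ) :
    HasSubgaussianMGF (fun x => ∑ j ∈ range n, c j * rademacher (j + 1) x)
      (∑ j ∈ range n, ‖c j‖₊ ^ 2) (volume.restrict (Set.Icc 0 1)) where
  integrable_exp_mul t := by
    simpa only [mul_sum, mul_assoc] using
      integrable_exp_sum_mul_rademacher (range n) (fun j => t * c j) (· + 1)
  mgf_le t := calc
    _ = ∫ x in (0:ℝ)..1, exp (∑ j ∈ range n, (t * c j) * rademacher (j + 1) x) := by
      rw [mgf, integral_Icc_eq_integral_Ioc, ← intervalIntegral.integral_of_le zero_le_one]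
      simp only [mul_sum, mul_assoc]
    _ = ∏ j ∈ range n, cosh (t * c j) := integral_exp_sum_mul_rademacher n _
    _ ≤ ∏ j ∈ range n, exp ((t * c j) ^ 2 / 2) :=
      prod_le_prod (fun _ _ => (cosh_pos _).le) fun _ _ => cosh_le_exp_half_sq _
    _ = _ := by
      rw [← exp_sum]
      push_cast
      simp only [norm_eq_abs, sq_abs, sum_mul, sum_div, mul_pow]
      ring_nf

lemma ProbabilityTheory.HasSubgaussianMGF.measure_abs_ge_le {Ω : Type*} [MeasurableSpace Ω]
    {μ : Measure Ω} [IsFiniteMeasure μ] {X : Ω → ℝ} {c : ℝ≥0} (h : HasSubgaussianMGF X c μ)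
    {ε : ℝ} (hε : 0 ≤ ε) :
    μ {ω | ε ≤ |X ω|} ≤ ENNReal.ofReal (2 * exp (-ε ^ 2 / (2 * c))) := by
  have hsplit : {ω | ε ≤ |X ω|} = {ω | ε ≤ X ω} ∪ {ω | ε ≤ (-X) ω} := by
    ext; simp [le_abs]
  calc μ {ω | ε ≤ |X ω|} ≤ μ {ω | ε ≤ X ω} + μ {ω | ε ≤ (-X) ω} :=
        hsplit ▸ measure_union_le _ _
    _ = ENNReal.ofReal (μ.real {ω | ε ≤ X ω}) + ENNReal.ofReal (μ.real {ω | ε ≤ (-X) ω}) := by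
      rw [ofReal_measureReal, ofReal_measureReal]
    _ ≤ ENNReal.ofReal (exp (-ε ^ 2 / (2 * c))) + ENNReal.ofReal (exp (-ε ^ 2 / (2 * c))) := by
      gcongr
      exacts [h.measure_ge_le hε, h.neg.measure_ge_le hε]
    _ = ENNReal.ofReal (2 * exp (-ε ^ 2 / (2 * c))) := by
      rw [← ENNReal.ofReal_add (by positivity) (by positivity), ← two_mul]

lemma ProbabilityTheory.HasSubgaussianMGF.measure_mul_sqrt_lt_abs_le {Ω : Type*}
    [MeasurableSpace Ω] {μ : Measure Ω} [IsFiniteMeasure μ] {X : Ω → ℝ} {c : ℝ≥0}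
    (h : HasSubgaussianMGF X c μ) {ε : ℝ} (hε : 0 ≤ ε) :
    μ {ω | ε * √c < |X ω|} ≤ ENNReal.ofReal (2 * exp (-ε ^ 2 / 2)) := by
  -- For `c = 0` the Chernoff exponent `ε ^ 2 / (2 * c)` is the junk value `0`.
  rcases eq_zero_or_pos c with rfl | hc
  · have hX : ∀ᵐ ω ∂μ, X ω = 0 := ae_eq_zero_of_hasSubgaussianMGF_zero h
    rw [measure_eq_zero_iff_ae_notMem.2 (hX.mono fun ω hω => by simp [hω])]
    exact bot_le
  calc μ {ω | ε * √c < |X ω|} ≤ μ {ω | ε * √c ≤ |X ω|} :=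
        measure_mono <| Set.ofPred_subset_ofPred.2 fun _ => le_of_lt
    _ ≤ ENNReal.ofReal (2 * exp (-(ε * √c) ^ 2 / (2 * c))) := h.measure_abs_ge_le (by positivity)
    _ = ENNReal.ofReal (2 * exp (-ε ^ 2 / 2)) := by
      rw [mul_pow, sq_sqrt c.coe_nonneg]
      field_simp [(NNReal.coe_pos.2 hc).ne']

/-- Subgaussian tail estimate for Rademacher sums. -/
theorem rademacher_tail (n : ℕ) (a : ℕ → ℝ) (lam : ℝ) (hlam : 0 ≤ lam) :
    volume {x ∈ Set.Icc (0:ℝ) 1 |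
        lam * Real.sqrt (∑ j ∈ Finset.Icc 1 n, (a j)^2) <
          |∑ j ∈ Finset.Icc 1 n, a j * rademacher j x|} ≤
      ENNReal.ofReal (2 * Real.exp (-lam^2/2)) := by
  have hV : ∑ j ∈ Icc 1 n, a j ^ 2 = ((∑ j ∈ range n, ‖a (j + 1)‖₊ ^ 2 : ℝ≥0) : ℝ) := by
    push_cast
    simp only [norm_eq_abs, sq_abs, sum_Icc_one_eq_sum_range]
  simp_rw [hV, sum_Icc_one_eq_sum_range]
  rw [← Set.inter_ofPred_eq_sep, Set.inter_comm, ← Measure.restrict_apply' measurableSet_Icc]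
  exact (hasSubgaussianMGF_sum_mul_rademacher n fun j => a (j + 1)).measure_mul_sqrt_lt_abs_le hlam
end

section
/- There is an absolute constant c_1 > 0 such that for all n ≥ 1 and all real numbers a_1,...,a_n, ∫_0^1 |Σ_{j=1}^n a_j r_j(x)| dx ≥ c_1 (Σ_{j=1}^n a_j²)^{1/2}, where r_j is the j-th Rademacher function. -/
open Real MeasureTheory

/-!
On each dyadic interval `(k / 2^n, (k + 1) / 2^n)` the functions `r_1, …, r_n` are constant, with
signs given by the binary digits of `k`, so the integral is the average of `|∑ a_j ε_j|` over all
`2^n` sign patterns `ε`. Splitting off the top digit shows by induction that over these patterns the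
second moment of `∑ a_j ε_j` is `∑ a_j²` and its fourth moment at most `3 (∑ a_j²)²`. Two
Cauchy–Schwarz steps give `(∑ f²)³ ≤ (∑ |f|)² ∑ f⁴`, so the average of `|∑ a_j ε_j|` is at least
`(∑ a_j²)^{1/2} / √3`.
-/

open Finset

theorem Finset.sum_range_sub_eq_sum_Icc {M : Type*} [AddCommMonoid M] (f : ℕ → M) (n : ℕ) :
    ∑ d ∈ range n, f (n - d) = ∑ j ∈ Icc 1 n, f j := by
  rw [← Nat.Ico_zero_eq_range, sum_Ico_reflect f 0 (Nat.le_succ n), ← Ico_add_one_right_eq_Icc]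
  simp

theorem Finset.sum_sq_pow_three_le {ι : Type*} (s : Finset ι) (f : ι → ℝ) :
    (∑ i ∈ s, f i ^ 2) ^ 3 ≤ (∑ i ∈ s, |f i|) ^ 2 * ∑ i ∈ s, f i ^ 4 := by
  set M₁ := ∑ i ∈ s, |f i|
  set M₂ := ∑ i ∈ s, f i ^ 2
  set M₃ := ∑ i ∈ s, |f i| ^ 3
  set M₄ := ∑ i ∈ s, f i ^ 4
  have h₁₃ : M₂ ^ 2 ≤ M₁ * M₃ :=
    sum_sq_le_sum_mul_sum_of_sq_le_mul s (fun i _ => abs_nonneg _) (fun i _ => by positivity)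
      fun i _ => le_of_eq (by rw [← sq_abs (f i)]; ring)
  have h₂₄ : M₃ ^ 2 ≤ M₂ * M₄ :=
    sum_sq_le_sum_mul_sum_of_sq_le_mul s (fun i _ => by positivity) (fun i _ => by positivity)
      fun i _ => le_of_eq (by rw [← abs_pow, sq_abs]; ring)
  have hM₂ : 0 ≤ M₂ := sum_nonneg fun i _ => sq_nonneg _
  have h : M₂ * M₂ ^ 3 ≤ M₂ * (M₁ ^ 2 * M₄) := by
    calc M₂ * M₂ ^ 3 = (M₂ ^ 2) ^ 2 := by ring
      _ ≤ (M₁ * M₃) ^ 2 := pow_le_pow_left₀ (sq_nonneg _) h₁₃ 2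
      _ = M₁ ^ 2 * M₃ ^ 2 := by ring
      _ ≤ M₁ ^ 2 * (M₂ * M₄) := mul_le_mul_of_nonneg_left h₂₄ (sq_nonneg _)
      _ = M₂ * (M₁ ^ 2 * M₄) := by ring
  rcases hM₂.eq_or_lt with h₀ | hpos
  · rw [← h₀, zero_pow three_ne_zero]; positivity
  · exact le_of_mul_le_mul_left h hpos

lemma intervalIntegrable_of_eqOn_Ioo {f : ℝ → ℝ} {a b c : ℝ} (hab : a ≤ b)
    (hf : Set.EqOn f (fun _ => c) (Set.Ioo a b)) : IntervalIntegrable f volume a b := by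
  rw [intervalIntegrable_iff_integrableOn_Ioo_of_le hab]
  exact (integrableOn_const measure_Ioo_lt_top.ne).congr_fun hf.symm measurableSet_Ioo

lemma intervalIntegral.integral_of_eqOn_Ioo {f : ℝ → ℝ} {a b c : ℝ} (hab : a ≤ b)
    (hf : Set.EqOn f (fun _ => c) (Set.Ioo a b)) : ∫ x in a..b, f x = (b - a) * c := by
  rw [intervalIntegral.integral_of_le hab, integral_Ioc_eq_integral_Ioo,
    setIntegral_congr_fun measurableSet_Ioo hf, setIntegral_const, volume_real_Ioo_of_le hab,
    smul_eq_mul]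

lemma intervalIntegral.integral_zero_one_of_eqOn_Ioo {f : ℝ → ℝ} {N : ℕ} (hN : 0 < N)
    (c : ℕ → ℝ)
    (hf : ∀ k < N, Set.EqOn f (fun _ => c k) (Set.Ioo (k / N) ((k + 1) / N))) :
    ∫ x in (0 : ℝ)..1, f x = (∑ k ∈ range N, c k) / N := by
  have hN' : (0 : ℝ) < N := Nat.cast_pos.mpr hN
  have hle : ∀ k : ℕ, (k : ℝ) / N ≤ (k + 1 : ℕ) / N := fun k => by gcongr; simp
  have hsum := intervalIntegral.sum_integral_adjacent_intervals (μ := volume)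
    (a := fun k : ℕ => (k : ℝ) / N) (f := f) fun k hk =>
      intervalIntegrable_of_eqOn_Ioo (hle k) (by push_cast; exact hf k hk)
  simp only [Nat.cast_zero, zero_div, div_self hN'.ne'] at hsum
  rw [← hsum, sum_div]
  refine sum_congr rfl fun k hk => ?_
  rw [intervalIntegral.integral_of_eqOn_Ioo (hle k) (by push_cast; exact hf k (mem_range.mp hk))]
  field_simp
  push_cast
  ring

lemma Real.sign_sin_pi_mul_of_mem_Ioo {y : ℝ} {m : ℕ} (hy : y ∈ Set.Ioo (m : ℝ) (m + 1)) :
    Real.sign (Real.sin (π * y)) = (-1) ^ m := by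
  have hsin : Real.sin (π * y) = (-1) ^ m * Real.sin (π * (y - m)) := by
    rw [← Real.sin_add_nat_mul_pi]; ring_nf
  have hpos : 0 < Real.sin (π * (y - m)) :=
    Real.sin_pos_of_pos_of_lt_pi (mul_pos Real.pi_pos (by linarith [hy.1]))
      (by nlinarith [hy.2, Real.pi_pos])
  rcases Nat.even_or_odd m with hm | hm
  · rw [hsin, hm.neg_one_pow, one_mul, Real.sign_of_pos hpos]
  · rw [hsin, hm.neg_one_pow, neg_one_mul, Real.sign_neg, Real.sign_of_pos hpos]

namespace Khintchine

noncomputable def digitSign (d k : ℕ) : ℝ := (-1) ^ (k / 2 ^ d)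

noncomputable def signSum (n : ℕ) (b : ℕ → ℝ) (k : ℕ) : ℝ := ∑ d ∈ range n, b d * digitSign d k

lemma digitSign_of_lt {d k : ℕ} (hk : k < 2 ^ d) : digitSign d k = 1 := by
  simp [digitSign, Nat.div_eq_of_lt hk]

lemma digitSign_two_pow_add_self {n k : ℕ} (hk : k < 2 ^ n) : digitSign n (2 ^ n + k) = -1 := by
  rw [digitSign, Nat.add_div_left _ (by positivity), Nat.div_eq_of_lt hk]
  norm_num

lemma digitSign_two_pow_add {d n k : ℕ} (hd : d < n) : digitSign d (2 ^ n + k) = digitSign d k := by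
  have h : 2 ^ n = 2 ^ (n - d) * 2 ^ d := by rw [← pow_add, Nat.sub_add_cancel hd.le]
  rw [digitSign, digitSign, h, add_comm, Nat.add_mul_div_right _ _ (by positivity), pow_add,
    (Nat.even_pow.mpr ⟨even_two, by omega⟩).neg_one_pow, mul_one]

lemma signSum_succ_of_lt {n k : ℕ} (b : ℕ → ℝ) (hk : k < 2 ^ n) :
    signSum (n + 1) b k = signSum n b k + b n := by
  rw [signSum, sum_range_succ, digitSign_of_lt hk, mul_one, signSum]

lemma signSum_succ_two_pow_add {n k : ℕ} (b : ℕ → ℝ) (hk : k < 2 ^ n) :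
    signSum (n + 1) b (2 ^ n + k) = signSum n b k - b n := by
  rw [signSum, sum_range_succ, digitSign_two_pow_add_self hk, mul_neg_one, ← sub_eq_add_neg,
    signSum]
  congr 1
  exact sum_congr rfl fun d hd => by rw [digitSign_two_pow_add (mem_range.mp hd)]

lemma sum_signSum_succ (F : ℝ → ℝ) (n : ℕ) (b : ℕ → ℝ) :
    ∑ k ∈ range (2 ^ (n + 1)), F (signSum (n + 1) b k)
      = ∑ k ∈ range (2 ^ n), (F (signSum n b k + b n) + F (signSum n b k - b n)) := by
  rw [pow_succ, mul_two, sum_range_add, ← sum_add_distrib]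
  refine sum_congr rfl fun k hk => ?_
  rw [signSum_succ_of_lt b (mem_range.mp hk), signSum_succ_two_pow_add b (mem_range.mp hk)]

lemma sum_signSum_sq (n : ℕ) (b : ℕ → ℝ) :
    ∑ k ∈ range (2 ^ n), signSum n b k ^ 2 = 2 ^ n * ∑ d ∈ range n, b d ^ 2 := by
  induction n with
  | zero => simp [signSum]
  | succ n ih =>
    rw [sum_signSum_succ (· ^ 2)]
    calc ∑ k ∈ range (2 ^ n), ((signSum n b k + b n) ^ 2 + (signSum n b k - b n) ^ 2)
        = ∑ k ∈ range (2 ^ n), (2 * signSum n b k ^ 2 + 2 * b n ^ 2) :=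
          sum_congr rfl fun k _ => by ring
      _ = 2 * ∑ k ∈ range (2 ^ n), signSum n b k ^ 2 + 2 ^ n * (2 * b n ^ 2) := by
          rw [sum_add_distrib, ← mul_sum, sum_const, card_range, nsmul_eq_mul]; push_cast; rfl
      _ = 2 ^ (n + 1) * ∑ d ∈ range (n + 1), b d ^ 2 := by
          rw [ih, sum_range_succ]; ring

lemma sum_signSum_pow_four_le (n : ℕ) (b : ℕ → ℝ) :
    ∑ k ∈ range (2 ^ n), signSum n b k ^ 4 ≤ 3 * 2 ^ n * (∑ d ∈ range n, b d ^ 2) ^ 2 := by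
  induction n with
  | zero => simp [signSum]
  | succ n ih =>
    set S := ∑ d ∈ range n, b d ^ 2
    rw [sum_signSum_succ (· ^ 4), sum_range_succ]
    calc ∑ k ∈ range (2 ^ n), ((signSum n b k + b n) ^ 4 + (signSum n b k - b n) ^ 4)
        = ∑ k ∈ range (2 ^ n),
            (2 * signSum n b k ^ 4 + 12 * b n ^ 2 * signSum n b k ^ 2 + 2 * b n ^ 4) :=
          sum_congr rfl fun k _ => by ring
      _ = 2 * ∑ k ∈ range (2 ^ n), signSum n b k ^ 4
            + 12 * b n ^ 2 * ∑ k ∈ range (2 ^ n), signSum n b k ^ 2 + 2 ^ n * (2 * b n ^ 4) := by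
          rw [sum_add_distrib, sum_add_distrib, ← mul_sum, ← mul_sum, sum_const, card_range,
            nsmul_eq_mul]
          push_cast; rfl
      _ ≤ 2 * (3 * 2 ^ n * S ^ 2) + 12 * b n ^ 2 * (2 ^ n * S) + 2 ^ n * (2 * b n ^ 4) := by
          rw [sum_signSum_sq]; gcongr
      _ ≤ 3 * 2 ^ (n + 1) * (S + b n ^ 2) ^ 2 := by
          have : 0 ≤ 2 ^ n * b n ^ 4 := by positivity
          rw [pow_succ' (2 : ℝ) n]; nlinarith

lemma sqrt_sum_sq_le_sum_abs_signSum (n : ℕ) (b : ℕ → ℝ) :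
    √(∑ d ∈ range n, b d ^ 2) ≤ √3 * ((∑ k ∈ range (2 ^ n), |signSum n b k|) / 2 ^ n) := by
  set S := ∑ d ∈ range n, b d ^ 2
  set Q := ∑ k ∈ range (2 ^ n), |signSum n b k|
  have hS : 0 ≤ S := sum_nonneg fun _ _ => sq_nonneg _
  have hQ : 0 ≤ Q := sum_nonneg fun _ _ => abs_nonneg _
  have hölder : (2 ^ n * S) ^ 3 ≤ Q ^ 2 * (3 * 2 ^ n * S ^ 2) := by
    rw [← sum_signSum_sq]
    exact (sum_sq_pow_three_le _ _).trans (by gcongr; exact sum_signSum_pow_four_le n b)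
  rw [Real.sqrt_le_iff]
  refine ⟨by positivity, ?_⟩
  rw [mul_pow, Real.sq_sqrt (by norm_num), div_pow, mul_div_assoc', le_div_iff₀ (by positivity)]
  rcases hS.eq_or_lt with h₀ | hpos
  · rw [← h₀, zero_mul]; positivity
  · refine le_of_mul_le_mul_left ?_ (by positivity : (0 : ℝ) < 2 ^ n * S ^ 2)
    linarith

lemma rademacher_eq_digitSign {n j k : ℕ} (hj : j ≤ n) {x : ℝ}
    (hx : x ∈ Set.Ioo ((k : ℝ) / 2 ^ n) ((k + 1) / 2 ^ n)) :
    rademacher j x = digitSign (n - j) k := by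
  set q := k / 2 ^ (n - j)
  have hN : (0 : ℝ) < 2 ^ (n - j) := by positivity
  have hsplit : (2 : ℝ) ^ n = 2 ^ j * 2 ^ (n - j) := by rw [← pow_add, Nat.add_sub_cancel' hj]
  have hq_le : (q : ℝ) * 2 ^ (n - j) ≤ k := by exact_mod_cast Nat.div_mul_le_self k (2 ^ (n - j))
  have hq_lt : (k : ℝ) + 1 ≤ (q + 1) * 2 ^ (n - j) := by
    exact_mod_cast (Nat.lt_mul_div_succ k (by positivity : 0 < 2 ^ (n - j))).trans_eq
      (Nat.mul_comm _ _)
  have hlo : (k : ℝ) < 2 ^ j * x * 2 ^ (n - j) := by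
    rw [mul_right_comm, ← hsplit, ← div_lt_iff₀' (by positivity)]; exact hx.1
  have hhi : 2 ^ j * x * 2 ^ (n - j) < (k : ℝ) + 1 := by
    rw [mul_right_comm, ← hsplit, ← lt_div_iff₀' (by positivity)]; exact hx.2
  have hy : 2 ^ j * x ∈ Set.Ioo (q : ℝ) (q + 1) :=
    ⟨lt_of_mul_lt_mul_right (hq_le.trans_lt hlo) hN.le,
      lt_of_mul_lt_mul_right (hhi.trans_le hq_lt) hN.le⟩
  rw [rademacher, digitSign, ← Real.sign_sin_pi_mul_of_mem_Ioo hy]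
  ring_nf

lemma integral_abs_sum_rademacher (n : ℕ) (a : ℕ → ℝ) :
    ∫ x in (0 : ℝ)..1, |∑ j ∈ Icc 1 n, a j * rademacher j x|
      = (∑ k ∈ range (2 ^ n), |signSum n (fun d => a (n - d)) k|) / 2 ^ n := by
  have h := intervalIntegral.integral_zero_one_of_eqOn_Ioo
    (f := fun x => |∑ j ∈ Icc 1 n, a j * rademacher j x|) (N := 2 ^ n) (by positivity)
    (fun k => |signSum n (fun d => a (n - d)) k|) fun k _ x hx => by
      push_cast at hx
      dsimp only
      rw [← sum_range_sub_eq_sum_Icc (fun j => a j * rademacher j x), signSum]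
      refine congrArg _ (sum_congr rfl fun d hd => ?_)
      have hd := mem_range.mp hd
      rw [rademacher_eq_digitSign (Nat.sub_le n d) hx, Nat.sub_sub_self hd.le]
  push_cast at h
  exact h

end Khintchine

/-- Lower Khintchine inequality in L¹ for Rademacher sums. -/
theorem khintchine_lower : ∃ c : ℝ, 0 < c ∧ ∀ (n : ℕ), 1 ≤ n → ∀ a : ℕ → ℝ,
    c * Real.sqrt (∑ j ∈ Finset.Icc 1 n, (a j)^2) ≤
      ∫ x in (0:ℝ)..1, |∑ j ∈ Finset.Icc 1 n, a j * rademacher j x| := by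
  refine ⟨(√3)⁻¹, by positivity, fun n _ a => ?_⟩
  set b : ℕ → ℝ := fun d => a (n - d)
  rw [Khintchine.integral_abs_sum_rademacher, ← sum_range_sub_eq_sum_Icc (fun j => a j ^ 2)]
  calc (√3)⁻¹ * √(∑ d ∈ range n, b d ^ 2)
      ≤ (√3)⁻¹ * (√3 * ((∑ k ∈ range (2 ^ n), |Khintchine.signSum n b k|) / 2 ^ n)) :=
        mul_le_mul_of_nonneg_left (Khintchine.sqrt_sum_sq_le_sum_abs_signSum n b) (by positivity)
    _ = (∑ k ∈ range (2 ^ n), |Khintchine.signSum n b k|) / 2 ^ n := by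
        field_simp
end

section
/- Let (m_k) be a strictly increasing sequence of positive integers with m_1 = 1, and let Φ = (φ_k) be an orthonormal system on [0,1] with φ_1 ≡ 1, satisfying: (1) for all k ≥ 1 and 1 ≤ j ≤ m_k, φ_j is constant on each interval ((i-1)/m_k, i/m_k), i = 1,...,m_k; (2) for all k ≥ 2 and n > m_k, ∫_0^1 φ_n(x)² φ_j(x) dx = 0 for 2 ≤ j ≤ m_k; (3) sup_n ‖φ_n‖_∞ = M < ∞. Let (n_k) be positive integers with n_1 = 1 and m_{k-1} < n_k ≤ m_k for k ≥ 2. Let N ≥ l+1 and let p_k be linear combinations of φ_1,...,φ_{m_l} for k = l+1,...,N, and f(x) = Σ_{k=l+1}^N p_k(x) φ_{n_k}(x). Then ‖f‖_∞ ≥ (1/M) Σ_{k=l+1}^N ‖p_k‖_1. -/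
open Real MeasureTheory

/-- L¹ norm of `f` on `(0,1)`. -/
noncomputable def l1Norm01 (f : ℝ → ℝ) : ℝ := ∫ x in (0:ℝ)..1, |f x|

/-- Essential supremum of `|f|` on `[0,1]`. -/
noncomputable def essSupNorm01 (f : ℝ → ℝ) : ℝ :=
  essSup (fun x => |f x|) (volume.restrict (Set.Icc (0:ℝ) 1))

/-!
Riesz products. Put `ψₜ = φ_{n_{l+1+t}}` and `bₜ = sign pₜ / M`, so that `|bₜ ψₜ| ≤ 1` a.e. and
`R = ∏ₜ (1 + bₜ ψₜ)` is a.e. nonnegative. A step function on the `m_k`-grid is a combination of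
`φ₁, …, φ_{m_k}` (these are `m_k` orthonormal step functions on a grid with `m_k` cells), so `ψₜ` is
orthogonal to every step function on the grid of the preceding block, and by (2) `ψₜ²` integrates
against it like `1`. Expanding the product then gives `∫ R = 1` and
`∫ f R = Σₜ ∫ pₜ bₜ = (1/M) Σₜ ‖pₜ‖₁`, while `∫ f R ≤ ‖f‖_∞ ∫ R = ‖f‖_∞`.
-/

open Finset Filter
open scoped ENNReal

local notation "μ₀" => Measure.restrict (volume : Measure ℝ) (Set.Icc (0 : ℝ) 1)

instance : IsProbabilityMeasure μ₀ := ⟨by simp⟩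

theorem intervalIntegral_zero_one_eq_integral_Icc (f : ℝ → ℝ) :
    ∫ x in (0:ℝ)..1, f x = ∫ x in Set.Icc 0 1, f x := by
  rw [intervalIntegral.integral_of_le zero_le_one, integral_Icc_eq_integral_Ioc]

section RieszProduct

variable {α : Type*} {V : ℕ → Subalgebra ℝ (α → ℝ)} {ψ a b : ℕ → α → ℝ} {T : ℕ}

def rieszProduct (b ψ : ℕ → α → ℝ) (T : ℕ) : α → ℝ := ∏ t ∈ range T, (1 + b t * ψ t)

theorem rieszProduct_apply (x : α) :
    rieszProduct b ψ T x = ∏ t ∈ range T, (1 + b t x * ψ t x) := by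
  simp [rieszProduct, Finset.prod_apply]

theorem rieszProduct_succ : rieszProduct b ψ (T + 1) = rieszProduct b ψ T * (1 + b T * ψ T) :=
  prod_range_succ _ _

theorem rieszProduct_mem (hV : Monotone V) (hψ : ∀ t, ψ t ∈ V (t + 1))
    (hb : ∀ t < T, b t ∈ V 0) : rieszProduct b ψ T ∈ V T :=
  prod_mem fun t ht => hV (Nat.succ_le_of_lt (mem_range.1 ht)) <|
    add_mem (one_mem _) (mul_mem (hV (Nat.zero_le _) (hb t (mem_range.1 ht))) (hψ t))

theorem sum_mul_mem (hV : Monotone V) (hψ : ∀ t, ψ t ∈ V (t + 1)) (ha : ∀ t < T, a t ∈ V 0) :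
    (fun x => ∑ t ∈ range T, a t x * ψ t x) ∈ V T := by
  convert sum_mem fun t ht => hV (Nat.succ_le_of_lt (mem_range.1 ht)) <|
    mul_mem (hV (Nat.zero_le _) (ha t (mem_range.1 ht))) (hψ t) using 1
  ext x
  simp [Finset.sum_apply]

variable [MeasurableSpace α] {μ : Measure α}

theorem integral_mul_rieszProduct (hV : Monotone V) (hint : ∀ t, ∀ g ∈ V t, Integrable g μ)
    (hψ : ∀ t, ψ t ∈ V (t + 1)) (horth : ∀ t, ∀ g ∈ V t, ∫ x, g x * ψ t x ∂μ = 0)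
    (hb : ∀ t < T, b t ∈ V 0) {h : α → ℝ} (hh : h ∈ V 0) :
    ∫ x, h x * rieszProduct b ψ T x ∂μ = ∫ x, h x ∂μ := by
  induction T with
  | zero => simp [rieszProduct]
  | succ T ih =>
    rw [rieszProduct_succ]
    set R := rieszProduct b ψ T
    have hhR : h * R ∈ V T :=
      mul_mem (hV (Nat.zero_le T) hh) (rieszProduct_mem hV hψ fun t ht => hb t (by omega))
    have hhRb : h * R * b T ∈ V T := mul_mem hhR (hV (Nat.zero_le T) (hb T (by omega)))
    have hzero : ∫ x, (h * R * b T * ψ T) x ∂μ = 0 := horth T _ hhRb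
    calc ∫ x, h x * (R * (1 + b T * ψ T)) x ∂μ
        = ∫ x, (h * R) x + (h * R * b T * ψ T) x ∂μ := by
          congr 1
          ext x
          simp only [Pi.mul_apply, Pi.add_apply, Pi.one_apply]
          ring
      _ = ∫ x, h x ∂μ := by
          rw [integral_add (hint T _ hhR) (hint (T + 1) _ (mul_mem (hV T.le_succ hhRb) (hψ T))),
            hzero, add_zero]
          exact ih fun t ht => hb t (by omega)

theorem integral_sum_mul_rieszProduct (hV : Monotone V)
    (hint : ∀ t, ∀ g ∈ V t, Integrable g μ) (hψ : ∀ t, ψ t ∈ V (t + 1))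
    (horth : ∀ t, ∀ g ∈ V t, ∫ x, g x * ψ t x ∂μ = 0)
    (hsq : ∀ t, ∀ g ∈ V t, ∫ x, ψ t x ^ 2 * g x ∂μ = ∫ x, g x ∂μ)
    (ha : ∀ t < T, a t ∈ V 0) (hb : ∀ t < T, b t ∈ V 0) :
    ∫ x, (∑ t ∈ range T, a t x * ψ t x) * rieszProduct b ψ T x ∂μ =
      ∑ t ∈ range T, ∫ x, a t x * b t x ∂μ := by
  induction T with
  | zero => simp
  | succ T ih =>
    have ha' : ∀ t < T, a t ∈ V 0 := fun t ht => ha t (by omega)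
    have hb' : ∀ t < T, b t ∈ V 0 := fun t ht => hb t (by omega)
    rw [rieszProduct_succ, sum_range_succ, ← ih ha' hb']
    set R := rieszProduct b ψ T
    set S : α → ℝ := fun x => ∑ t ∈ range T, a t x * ψ t x
    have hR : R ∈ V T := rieszProduct_mem hV hψ hb'
    have hS : S ∈ V T := sum_mul_mem hV hψ ha'
    have haT : a T ∈ V T := hV (Nat.zero_le T) (ha T (by omega))
    have hbT : b T ∈ V T := hV (Nat.zero_le T) (hb T (by omega))
    have hψT : ψ T ∈ V (T + 1) := hψ T
    have hup {g : α → ℝ} (hg : g ∈ V T) : g ∈ V (T + 1) := hV T.le_succ hg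
    have h₁ : ∫ x, (S * R * b T * ψ T) x ∂μ = 0 := horth T _ (mul_mem (mul_mem hS hR) hbT)
    have h₂ : ∫ x, (a T * R * ψ T) x ∂μ = 0 := horth T _ (mul_mem haT hR)
    have h₃ : ∫ x, (ψ T ^ 2 * (a T * b T * R)) x ∂μ = ∫ x, a T x * b T x ∂μ :=
      (hsq T _ (mul_mem (mul_mem haT hbT) hR)).trans <|
        integral_mul_rieszProduct hV hint hψ horth hb' (mul_mem (ha T (by omega)) (hb T (by omega)))
    calc ∫ x, (∑ t ∈ range (T + 1), a t x * ψ t x) * (R * (1 + b T * ψ T)) x ∂μ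
        = ∫ x, (S * R) x + (S * R * b T * ψ T) x
            + ((a T * R * ψ T) x + (ψ T ^ 2 * (a T * b T * R)) x) ∂μ := by
          congr 1
          ext x
          simp only [sum_range_succ, Pi.mul_apply, Pi.add_apply, Pi.one_apply, Pi.pow_apply, S]
          ring
      _ = _ := by
          have i₀ : Integrable (S * R) μ := hint T _ (mul_mem hS hR)
          have i₁ : Integrable (S * R * b T * ψ T) μ :=
            hint (T + 1) _ (mul_mem (hup (mul_mem (mul_mem hS hR) hbT)) hψT)
          have i₂ : Integrable (a T * R * ψ T) μ :=
            hint (T + 1) _ (mul_mem (hup (mul_mem haT hR)) hψT)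
          have i₃ : Integrable (ψ T ^ 2 * (a T * b T * R)) μ :=
            hint (T + 1) _ (mul_mem (pow_mem hψT 2) (hup (mul_mem (mul_mem haT hbT) hR)))
          rw [integral_add (i₀.fun_add i₁) (i₂.fun_add i₃), integral_add i₀ i₁, integral_add i₂ i₃,
            h₁, h₂, h₃, add_zero, zero_add]
          rfl

theorem sum_integral_mul_le [IsProbabilityMeasure μ] (hV : Monotone V)
    (hint : ∀ t, ∀ g ∈ V t, Integrable g μ) (hψ : ∀ t, ψ t ∈ V (t + 1))
    (horth : ∀ t, ∀ g ∈ V t, ∫ x, g x * ψ t x ∂μ = 0)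
    (hsq : ∀ t, ∀ g ∈ V t, ∫ x, ψ t x ^ 2 * g x ∂μ = ∫ x, g x ∂μ)
    (ha : ∀ t < T, a t ∈ V 0) (hb : ∀ t < T, b t ∈ V 0)
    (hbψ : ∀ t < T, ∀ᵐ x ∂μ, |b t x * ψ t x| ≤ 1) {C : ℝ}
    (hC : ∀ᵐ x ∂μ, |∑ t ∈ range T, a t x * ψ t x| ≤ C) :
    ∑ t ∈ range T, ∫ x, a t x * b t x ∂μ ≤ C := by
  have hR : rieszProduct b ψ T ∈ V T := rieszProduct_mem hV hψ hb
  have hR_nonneg : ∀ᵐ x ∂μ, 0 ≤ rieszProduct b ψ T x := by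
    filter_upwards [(eventually_all_finset (range T)).2 fun t ht => hbψ t (mem_range.1 ht)]
      with x hx
    rw [rieszProduct_apply]
    exact prod_nonneg fun t ht => by linarith [neg_abs_le (b t x * ψ t x), hx t ht]
  have hR_mass : ∫ x, rieszProduct b ψ T x ∂μ = 1 := by
    simpa using integral_mul_rieszProduct hV hint hψ horth hb (one_mem (V 0))
  calc ∑ t ∈ range T, ∫ x, a t x * b t x ∂μ
      = ∫ x, (∑ t ∈ range T, a t x * ψ t x) * rieszProduct b ψ T x ∂μ :=
        (integral_sum_mul_rieszProduct hV hint hψ horth hsq ha hb).symm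
    _ ≤ ∫ x, C * rieszProduct b ψ T x ∂μ := by
        refine integral_mono_ae (hint T _ (mul_mem (sum_mul_mem hV hψ ha) hR))
          ((hint T _ hR).const_mul C) ?_
        filter_upwards [hC, hR_nonneg] with x hx hx'
        exact mul_le_mul_of_nonneg_right ((le_abs_self _).trans hx) hx'
    _ = C := by rw [integral_const_mul, hR_mass, mul_one]

end RieszProduct

section Grid

def gridCell (m i : ℕ) : Set ℝ := Set.Ioo (((i : ℝ) - 1) / m) ((i : ℝ) / m)

noncomputable def gridCenter (m i : ℕ) : ℝ := ((i : ℝ) - 1 / 2) / m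

def IsGridStep (m : ℕ) (g : ℝ → ℝ) : Prop :=
  ∀ i, 1 ≤ i → i ≤ m → ∀ x ∈ gridCell m i, ∀ y ∈ gridCell m i, g x = g y

variable {m i : ℕ} {g : ℝ → ℝ}

theorem measurableSet_gridCell : MeasurableSet (gridCell m i) := measurableSet_Ioo

theorem gridCenter_mem_gridCell (hi : i ∈ Icc 1 m) : gridCenter m i ∈ gridCell m i := by
  rw [mem_Icc] at hi
  have hm : (0 : ℝ) < m := by exact_mod_cast hi.1.trans hi.2
  constructor <;> apply div_lt_div_of_pos_right _ hm <;> linarith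

theorem gridCell_subset_Icc (hi : i ∈ Icc 1 m) : gridCell m i ⊆ Set.Icc 0 1 := by
  rw [mem_Icc] at hi
  have hm : (0 : ℝ) < m := by exact_mod_cast hi.1.trans hi.2
  have hi1 : (1 : ℝ) ≤ i := by exact_mod_cast hi.1
  have him : (i : ℝ) ≤ m := by exact_mod_cast hi.2
  rintro x ⟨hx₁, hx₂⟩
  exact ⟨(div_nonneg (by linarith) hm.le).trans hx₁.le, hx₂.le.trans ((div_le_one hm).2 him)⟩

theorem disjoint_gridCell {i' : ℕ} (h : i ≠ i') : Disjoint (gridCell m i) (gridCell m i') := by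
  wlog hlt : i < i' generalizing i i'
  · exact (this h.symm (by omega)).symm
  have : (i : ℝ) ≤ i' - 1 := by
    have : (i : ℝ) + 1 ≤ i' := by exact_mod_cast hlt
    linarith
  exact Set.disjoint_left.2 fun x hx hx' =>
    (hx'.1.trans hx.2).not_ge (div_le_div_of_nonneg_right this m.cast_nonneg)

theorem ae_mem_gridCell (hm : 1 ≤ m) : ∀ᵐ x ∂μ₀, ∃ i ∈ Icc 1 m, x ∈ gridCell m i := by
  have hm₀ : (0 : ℝ) < m := by exact_mod_cast hm
  have hnull : volume ((range (m + 1)).image fun k : ℕ => (k : ℝ) / m : Set ℝ) = 0 :=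
    (Finset.finite_toSet _).measure_zero _
  rw [ae_restrict_iff' measurableSet_Icc]
  -- off the grid points `k / m`, `x` lies in the cell of index `⌊x m⌋ + 1`
  refine measure_mono_null (fun x hx => ?_) hnull
  obtain ⟨⟨hx0, hx1⟩, hx⟩ := Classical.not_imp.1 hx
  set k := ⌊x * m⌋₊
  have hk : (k : ℝ) ≤ x * m := Nat.floor_le (by positivity)
  by_contra hne
  have hlt : (k : ℝ) < x * m := hk.lt_of_ne fun h => hne <| by
    refine mem_coe.2 (mem_image.2 ⟨k, mem_range.2 ?_, by rw [h]; field_simp⟩)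
    have : (k : ℝ) ≤ m := by rw [h]; nlinarith
    exact Nat.lt_succ_of_le (by exact_mod_cast this)
  have hkm : k < m := by
    have : (k : ℝ) < m := by nlinarith
    exact_mod_cast this
  refine hx ⟨k + 1, mem_Icc.2 ⟨by omega, by omega⟩, ?_, ?_⟩
  · rw [div_lt_iff₀ hm₀]; push_cast; linarith
  · rw [lt_div_iff₀ hm₀]; push_cast; linarith [Nat.lt_floor_add_one (x * m)]

end Grid

section GridIntegral

variable {m : ℕ} {g : ℝ → ℝ}

theorem IsGridStep.ae_eq_sum_indicator (hm : 1 ≤ m) (hg : IsGridStep m g) :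
    g =ᵐ[μ₀] fun x => ∑ i ∈ Icc 1 m, (gridCell m i).indicator (fun _ => g (gridCenter m i)) x := by
  filter_upwards [ae_mem_gridCell hm] with x ⟨i, hi, hx⟩
  rw [sum_eq_single_of_mem i hi fun i' _ hne =>
    Set.indicator_of_notMem ((disjoint_gridCell hne.symm).notMem_of_mem_left hx) _,
    Set.indicator_of_mem hx]
  exact hg i (mem_Icc.1 hi).1 (mem_Icc.1 hi).2 x hx _ (gridCenter_mem_gridCell hi)

theorem IsGridStep.ae_abs_le (hm : 1 ≤ m) (hg : IsGridStep m g) :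
    ∀ᵐ x ∂μ₀, |g x| ≤ ∑ i ∈ Icc 1 m, |g (gridCenter m i)| := by
  filter_upwards [ae_mem_gridCell hm] with x ⟨i, hi, hx⟩
  rw [hg i (mem_Icc.1 hi).1 (mem_Icc.1 hi).2 x hx _ (gridCenter_mem_gridCell hi)]
  exact single_le_sum (f := fun i => |g (gridCenter m i)|) (fun _ _ => abs_nonneg _) hi

theorem IsGridStep.memLp_top (hm : 1 ≤ m) (hg : IsGridStep m g) : MemLp g ∞ μ₀ := by
  refine memLp_top_of_bound ?_ _ (hg.ae_abs_le hm)
  refine (Measurable.aestronglyMeasurable ?_).congr (hg.ae_eq_sum_indicator hm).symm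
  exact Finset.measurable_sum _ fun i _ => measurable_const.indicator measurableSet_gridCell

theorem IsGridStep.integrable (hm : 1 ≤ m) (hg : IsGridStep m g) : Integrable g μ₀ :=
  (hg.memLp_top hm).integrable le_top

theorem IsGridStep.ae_abs_le_essSupNorm01 (hm : 1 ≤ m) (hg : IsGridStep m g) :
    ∀ᵐ x ∂μ₀, |g x| ≤ essSupNorm01 g :=
  ae_le_essSup ⟨_, hg.ae_abs_le hm⟩

theorem IsGridStep.integral_eq (hm : 1 ≤ m) (hg : IsGridStep m g) :
    ∫ x in Set.Icc 0 1, g x = (∑ i ∈ Icc 1 m, g (gridCenter m i)) / m := by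
  rw [integral_congr_ae (hg.ae_eq_sum_indicator hm),
    integral_finsetSum _ fun i _ => (integrable_const _).indicator measurableSet_gridCell, sum_div]
  refine sum_congr rfl fun i hi => ?_
  rw [integral_indicator_const _ measurableSet_gridCell,
    measureReal_restrict_apply measurableSet_gridCell,
    Set.inter_eq_left.2 (gridCell_subset_Icc hi), gridCell,
    volume_real_Ioo_of_le (div_le_div_of_nonneg_right (by linarith) m.cast_nonneg), smul_eq_mul]
  have hm₀ : (m : ℝ) ≠ 0 := by positivity
  field_simp
  ring

end GridIntegral

section GridStepAlgebra

variable {m : ℕ} {g h : ℝ → ℝ}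

theorem IsGridStep.comp (F : ℝ → ℝ) (hg : IsGridStep m g) : IsGridStep m (F ∘ g) :=
  fun i h₁ h₂ x hx y hy => congrArg F (hg i h₁ h₂ x hx y hy)

theorem IsGridStep.comp₂ (F : ℝ → ℝ → ℝ) (hg : IsGridStep m g) (hh : IsGridStep m h) :
    IsGridStep m fun x => F (g x) (h x) :=
  fun i h₁ h₂ x hx y hy => congrArg₂ F (hg i h₁ h₂ x hx y hy) (hh i h₁ h₂ x hx y hy)

def gridStepSubalgebra (m : ℕ) : Subalgebra ℝ (ℝ → ℝ) where
  carrier := {g | IsGridStep m g}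
  mul_mem' hg hh := hg.comp₂ (· * ·) hh
  add_mem' hg hh := hg.comp₂ (· + ·) hh
  algebraMap_mem' _ _ _ _ _ _ _ _ := rfl

theorem mem_gridStepSubalgebra : g ∈ gridStepSubalgebra m ↔ IsGridStep m g := Iff.rfl

end GridStepAlgebra

section Orthogonality

variable {m n : ℕ} {g : ℝ → ℝ} {φ : ℕ → ℝ → ℝ}

theorem IsGridStep.ae_eq_sum_integral_mul (hm : 1 ≤ m)
    (hφ : ∀ j ∈ Icc 1 m, IsGridStep m (φ j))
    (horth : ∀ i ∈ Icc 1 m, ∀ j ∈ Icc 1 m,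
      ∫ x in Set.Icc 0 1, φ i x * φ j x = if i = j then 1 else 0)
    (hg : IsGridStep m g) :
    g =ᵐ[μ₀] fun x => ∑ j ∈ Icc 1 m, (∫ y in Set.Icc 0 1, g y * φ j y) * φ j x := by
  let c (i : Icc 1 m) : ℝ := gridCenter m i
  have hsample {f h : ℝ → ℝ} (hf : IsGridStep m f) (hh : IsGridStep m h) :
      ∫ x in Set.Icc 0 1, f x * h x = (∑ r : Icc 1 m, f (c r) * h (c r)) / m := by
    rw [(hf.comp₂ (· * ·) hh).integral_eq hm, sum_coe_sort (Icc 1 m) fun r => f _ * h _]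
  -- `A` samples `φ 1, …, φ m` at the cell centres: its columns are orthogonal by `horth`, hence
  -- (`A` being square) so are its rows, and this is the expansion of `g` at the centres.
  let A : Matrix (Icc 1 m) (Icc 1 m) ℝ := .of fun i j => φ j (c i)
  have hcols : A.transpose * ((m : ℝ)⁻¹ • A) = 1 := by
    ext j k
    have := horth j j.2 k k.2
    rw [hsample (hφ j j.2) (hφ k k.2)] at this
    simp only [Matrix.mul_apply, Matrix.smul_apply, Matrix.transpose_apply, Matrix.one_apply,
      Matrix.of_apply, Subtype.ext_iff, smul_eq_mul, A, ← this, sum_div]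
    exact sum_congr rfl fun r _ => by ring
  have hrows (i r : Icc 1 m) :
      ∑ j : Icc 1 m, φ j (c i) * φ j (c r) / m = if i = r then 1 else 0 := by
    have := congrArg (· i r) (mul_eq_one_comm.1 hcols)
    simp only [Matrix.mul_apply, Matrix.smul_apply, Matrix.transpose_apply, Matrix.one_apply,
      Matrix.of_apply, smul_eq_mul, A] at this
    rw [← this]
    exact sum_congr rfl fun j _ => by ring
  have hcenter (i : Icc 1 m) :
      g (c i) = ∑ j : Icc 1 m, (∫ y in Set.Icc 0 1, g y * φ j y) * φ j (c i) := by
    calc g (c i) = ∑ r : Icc 1 m, (if i = r then 1 else 0) * g (c r) := by simp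
      _ = ∑ j : Icc 1 m, (∑ r : Icc 1 m, g (c r) * φ j (c r)) / m * φ j (c i) := by
        simp_rw [← hrows, sum_mul, sum_div, sum_mul]
        rw [sum_comm]
        exact sum_congr rfl fun _ _ => sum_congr rfl fun _ _ => by ring
      _ = _ := by simp_rw [hsample hg (hφ _ (Subtype.prop _))]
  filter_upwards [ae_mem_gridCell hm] with x ⟨i, hi, hx⟩
  have hcell {f : ℝ → ℝ} (hf : IsGridStep m f) : f x = f (c ⟨i, hi⟩) :=
    hf i (mem_Icc.1 hi).1 (mem_Icc.1 hi).2 x hx _ (gridCenter_mem_gridCell hi)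
  rw [hcell hg, hcenter, ← sum_coe_sort (Icc 1 m)]
  exact sum_congr rfl fun j _ => by rw [hcell (hφ j j.2)]

theorem IsGridStep.integral_mul_eq_zero (hm : 1 ≤ m) (hmn : m < n)
    (horth : ∀ i j, 1 ≤ i → 1 ≤ j →
      ∫ x in Set.Icc 0 1, φ i x * φ j x = if i = j then 1 else 0)
    (hφ : ∀ j ∈ Icc 1 m, IsGridStep m (φ j)) (hφn : MemLp (φ n) ∞ μ₀) (hg : IsGridStep m g) :
    ∫ x in Set.Icc 0 1, g x * φ n x = 0 := by
  have hexp := hg.ae_eq_sum_integral_mul hm hφ fun i hi j hj =>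
    horth i j (mem_Icc.1 hi).1 (mem_Icc.1 hj).1
  calc ∫ x in Set.Icc 0 1, g x * φ n x
      = ∫ x in Set.Icc 0 1, ∑ j ∈ Icc 1 m,
          (∫ y in Set.Icc 0 1, g y * φ j y) * (φ j x * φ n x) := by
        refine integral_congr_ae ?_
        filter_upwards [hexp] with x hx
        simp_rw [hx, sum_mul, mul_assoc]
    _ = 0 := by
        rw [integral_finsetSum _ fun j hj => Integrable.const_mul
          (show Integrable (fun x => φ j x * φ n x) μ₀ from
            (hφn.mul ((hφ j hj).memLp_top hm)).integrable le_top) _]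
        refine sum_eq_zero fun j hj => ?_
        rw [integral_const_mul, horth j n (mem_Icc.1 hj).1 (by omega),
          if_neg (by linarith [(mem_Icc.1 hj).2]), mul_zero]

theorem IsGridStep.integral_sq_mul (hm : 1 ≤ m) (hn : 1 ≤ n)
    (horth : ∀ i j, 1 ≤ i → 1 ≤ j →
      ∫ x in Set.Icc 0 1, φ i x * φ j x = if i = j then 1 else 0)
    (hφ1 : ∀ x, φ 1 x = 1) (horth₂ : ∀ j ∈ Icc 2 m, ∫ x in Set.Icc 0 1, φ n x ^ 2 * φ j x = 0)
    (hφ : ∀ j ∈ Icc 1 m, IsGridStep m (φ j)) (hφn : MemLp (φ n) ∞ μ₀) (hg : IsGridStep m g) :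
    ∫ x in Set.Icc 0 1, φ n x ^ 2 * g x = ∫ x in Set.Icc 0 1, g x := by
  have hexp := hg.ae_eq_sum_integral_mul hm hφ fun i hi j hj =>
    horth i j (mem_Icc.1 hi).1 (mem_Icc.1 hj).1
  have hsq : ∀ j ∈ Icc 1 m, ∫ x in Set.Icc 0 1, φ n x ^ 2 * φ j x = if j = 1 then 1 else 0 := by
    intro j hj
    obtain ⟨hj₁, hjm⟩ := mem_Icc.1 hj
    obtain rfl | hj₂ := eq_or_ne j 1
    · simpa [hφ1, sq] using horth n n hn hn
    · rw [if_neg hj₂, horth₂ j (mem_Icc.2 ⟨by omega, hjm⟩)]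
  calc ∫ x in Set.Icc 0 1, φ n x ^ 2 * g x
      = ∫ x in Set.Icc 0 1, ∑ j ∈ Icc 1 m,
          (∫ y in Set.Icc 0 1, g y * φ j y) * (φ n x ^ 2 * φ j x) := by
        refine integral_congr_ae ?_
        filter_upwards [hexp] with x hx
        simp_rw [hx, mul_sum, mul_left_comm]
    _ = ∫ y in Set.Icc 0 1, g y * φ 1 y := by
        rw [integral_finsetSum _ fun j hj => Integrable.const_mul
          (show Integrable (fun x => φ n x ^ 2 * φ j x) μ₀ by
            simp only [sq]
            exact (((hφ j hj).memLp_top hm).mul (hφn.mul (r := ∞) hφn)).integrable le_top) _]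
        simp_rw [integral_const_mul]
        rw [sum_congr rfl fun j hj => by rw [hsq j hj, mul_ite, mul_one, mul_zero], sum_ite_eq']
        simp [hm]
    _ = ∫ x in Set.Icc 0 1, g x := by simp [hφ1]

end Orthogonality

section GridStepFrom

variable {m : ℕ → ℕ} {φ : ℕ → ℝ → ℝ} {g : ℝ → ℝ} {k : ℕ}

-- The grids `m K` need not refine one another, so membership asks for every later grid.
def gridStepFrom (m : ℕ → ℕ) (k : ℕ) : Subalgebra ℝ (ℝ → ℝ) := ⨅ K ≥ k, gridStepSubalgebra (m K)

theorem mem_gridStepFrom : g ∈ gridStepFrom m k ↔ ∀ K ≥ k, IsGridStep (m K) g := by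
  simp only [gridStepFrom, Algebra.mem_iInf, mem_gridStepSubalgebra]

theorem gridStepFrom_mono (m : ℕ → ℕ) : Monotone (gridStepFrom m) := fun _ _ hk _ hg =>
  mem_gridStepFrom.2 fun K hK => mem_gridStepFrom.1 hg K (hk.trans hK)

theorem comp_mem_gridStepFrom (F : ℝ → ℝ) (hg : g ∈ gridStepFrom m k) :
    F ∘ g ∈ gridStepFrom m k :=
  mem_gridStepFrom.2 fun K hK => (mem_gridStepFrom.1 hg K hK).comp F

theorem mem_gridStepFrom_of_le (hm : MonotoneOn m (Set.Ici 1))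
    (hstep : ∀ k, 1 ≤ k → ∀ j, 1 ≤ j → j ≤ m k → IsGridStep (m k) (φ j))
    (hk : 1 ≤ k) {j : ℕ} (hj : 1 ≤ j) (hjk : j ≤ m k) : φ j ∈ gridStepFrom m k :=
  mem_gridStepFrom.2 fun K hK =>
    hstep K (hk.trans hK) j hj (hjk.trans (hm (Set.mem_Ici.2 hk) (Set.mem_Ici.2 (hk.trans hK)) hK))

theorem sum_mul_mem_gridStepFrom (hm : MonotoneOn m (Set.Ici 1))
    (hstep : ∀ k, 1 ≤ k → ∀ j, 1 ≤ j → j ≤ m k → IsGridStep (m k) (φ j)) (hk : 1 ≤ k)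
    (c : ℕ → ℝ) : (fun x => ∑ j ∈ Icc 1 (m k), c j * φ j x) ∈ gridStepFrom m k := by
  convert sum_mem fun j hj => Subalgebra.smul_mem _
    (mem_gridStepFrom_of_le hm hstep hk (mem_Icc.1 hj).1 (mem_Icc.1 hj).2) (c j) using 1
  ext x
  simp [Finset.sum_apply]

end GridStepFrom

section DiscreteSystem

variable {m : ℕ → ℕ} {φ : ℕ → ℝ → ℝ} {g : ℝ → ℝ} {k n : ℕ}

theorem integral_mul_eq_zero_of_mem_gridStepFrom
    (hstep : ∀ k, 1 ≤ k → ∀ j, 1 ≤ j → j ≤ m k → IsGridStep (m k) (φ j))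
    (horth : ∀ i j, 1 ≤ i → 1 ≤ j →
      ∫ x in Set.Icc 0 1, φ i x * φ j x = if i = j then 1 else 0)
    (hk : 1 ≤ k) (hmk : 1 ≤ m k) (hkn : m k < n) (hn : n ≤ m (k + 1))
    (hg : g ∈ gridStepFrom m k) : ∫ x in Set.Icc 0 1, g x * φ n x = 0 := (mem_gridStepFrom.1 hg k le_rfl).integral_mul_eq_zero hmk hkn horth
    (fun j hj => hstep k hk j (mem_Icc.1 hj).1 (mem_Icc.1 hj).2)
    ((hstep (k + 1) (by omega) n (by omega) hn).memLp_top (by omega))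

theorem integral_sq_mul_of_mem_gridStepFrom (hm1 : m 1 = 1)
    (hstep : ∀ k, 1 ≤ k → ∀ j, 1 ≤ j → j ≤ m k → IsGridStep (m k) (φ j))
    (horth : ∀ i j, 1 ≤ i → 1 ≤ j →
      ∫ x in Set.Icc 0 1, φ i x * φ j x = if i = j then 1 else 0)
    (hφ1 : ∀ x, φ 1 x = 1)
    (horth₂ : ∀ k, 2 ≤ k → ∀ n, m k < n → ∀ j, 2 ≤ j → j ≤ m k →
      ∫ x in Set.Icc 0 1, φ n x ^ 2 * φ j x = 0)
    (hk : 1 ≤ k) (hmk : 1 ≤ m k) (hkn : m k < n) (hn : n ≤ m (k + 1))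
    (hg : g ∈ gridStepFrom m k) :
    ∫ x in Set.Icc 0 1, φ n x ^ 2 * g x = ∫ x in Set.Icc 0 1, g x := by
  refine (mem_gridStepFrom.1 hg k le_rfl).integral_sq_mul hmk (by omega) horth hφ1
    (fun j hj => ?_) (fun j hj => hstep k hk j (mem_Icc.1 hj).1 (mem_Icc.1 hj).2)
    ((hstep (k + 1) (by omega) n (by omega) hn).memLp_top (by omega))
  obtain ⟨hj₂, hjk⟩ := mem_Icc.1 hj
  -- for `k = 1` there is no such `j`, as `m 1 = 1`
  have hk₂ : 2 ≤ k := by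
    by_contra h
    obtain rfl : k = 1 := by omega
    omega
  exact horth₂ k hk₂ n hkn j hj₂ hjk

end DiscreteSystem

theorem sum_integral_abs_div_le_essSupNorm01 {m : ℕ → ℕ} {φ : ℕ → ℝ → ℝ}
    (hm : MonotoneOn m (Set.Ici 1)) (hm1 : m 1 = 1)
    (hstep : ∀ k, 1 ≤ k → ∀ j, 1 ≤ j → j ≤ m k → IsGridStep (m k) (φ j))
    (horth : ∀ i j, 1 ≤ i → 1 ≤ j →
      ∫ x in Set.Icc 0 1, φ i x * φ j x = if i = j then 1 else 0)
    (hφ1 : ∀ x, φ 1 x = 1)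
    (horth₂ : ∀ k, 2 ≤ k → ∀ n, m k < n → ∀ j, 2 ≤ j → j ≤ m k →
      ∫ x in Set.Icc 0 1, φ n x ^ 2 * φ j x = 0)
    {M : ℝ} (hM : 0 < M) (hbound : ∀ n, 1 ≤ n → essSupNorm01 (φ n) ≤ M)
    {l : ℕ} (hl : 1 ≤ l) {n : ℕ → ℕ} (hn : ∀ t, m (l + t) < n t ∧ n t ≤ m (l + t + 1))
    {p : ℕ → ℝ → ℝ} {T : ℕ} (hp : ∀ t < T, p t ∈ gridStepFrom m l) :
    ∑ t ∈ range T, (∫ x in Set.Icc 0 1, |p t x|) / M ≤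
      essSupNorm01 (fun x => ∑ t ∈ range T, p t x * φ (n t) x) := by
  have hmpos (k : ℕ) (hk : 1 ≤ k) : 1 ≤ m k := hm1 ▸ hm Set.self_mem_Ici hk hk
  have hn₁ (t : ℕ) : 1 ≤ n t := by linarith [hmpos (l + t) (by omega), (hn t).1]
  set V : ℕ → Subalgebra ℝ (ℝ → ℝ) := fun t => gridStepFrom m (l + t)
  have hV : Monotone V := fun s t hst => gridStepFrom_mono m (by omega)
  have hgrid (t : ℕ) {g : ℝ → ℝ} (hg : g ∈ V t) : IsGridStep (m (l + t)) g :=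
    mem_gridStepFrom.1 hg _ le_rfl
  have hψ (t : ℕ) : φ (n t) ∈ V (t + 1) :=
    mem_gridStepFrom_of_le hm hstep (by omega) (hn₁ t) (hn t).2
  have hbψ : ∀ t < T, ∀ᵐ x ∂μ₀, |(SignType.sign (p t x) : ℝ) / M * φ (n t) x| ≤ 1 := by
    intro t _
    filter_upwards [(mem_gridStepFrom.1 (hψ t) _ le_rfl).ae_abs_le_essSupNorm01
      (hmpos _ (by omega))] with x hx
    have hsign : |(SignType.sign (p t x) : ℝ)| ≤ 1 := by cases SignType.sign (p t x) <;> simp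
    rw [abs_mul, abs_div, abs_of_pos hM, div_mul_eq_mul_div, div_le_one hM]
    exact (mul_le_of_le_one_left (abs_nonneg _) hsign).trans (hx.trans (hbound _ (hn₁ t)))
  have key := sum_integral_mul_le hV (fun t g hg => (hgrid t hg).integrable (hmpos _ (by omega)))
    hψ (fun t g hg => integral_mul_eq_zero_of_mem_gridStepFrom hstep horth (by omega)
      (hmpos _ (by omega)) (hn t).1 (hn t).2 hg)
    (fun t g hg => integral_sq_mul_of_mem_gridStepFrom hm1 hstep horth hφ1 horth₂ (by omega)
      (hmpos _ (by omega)) (hn t).1 (hn t).2 hg)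
    hp (fun t ht => comp_mem_gridStepFrom (fun y => (SignType.sign y : ℝ) / M) (hp t ht)) hbψ
    ((hgrid T (sum_mul_mem hV hψ hp)).ae_abs_le_essSupNorm01 (hmpos _ (by omega)))
  refine le_of_eq_of_le (sum_congr rfl fun t _ => ?_) key
  rw [← integral_div]
  simp only [Function.comp_apply, mul_div_assoc', self_mul_sign]

theorem discrete_sidon_general (m : ℕ → ℕ) (hm1 : m 1 = 1) (hmono : ∀ k, 1 ≤ k → m k < m (k+1))
    (φ : ℕ → ℝ → ℝ) (hφ1 : ∀ x, φ 1 x = 1)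
    (horth : ∀ i j, 1 ≤ i → 1 ≤ j →
      (∫ x in (0:ℝ)..1, φ i x * φ j x) = if i = j then 1 else 0)
    (hstep : ∀ k, 1 ≤ k → ∀ j, 1 ≤ j → j ≤ m k → ∀ i, 1 ≤ i → i ≤ m k →
      ∀ x ∈ Set.Ioo (((i:ℝ)-1)/(m k)) ((i:ℝ)/(m k)),
        ∀ y ∈ Set.Ioo (((i:ℝ)-1)/(m k)) ((i:ℝ)/(m k)), φ j x = φ j y)
    (horth2 : ∀ k, 2 ≤ k → ∀ n, m k < n → ∀ j, 2 ≤ j → j ≤ m k →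
      (∫ x in (0:ℝ)..1, (φ n x)^2 * φ j x) = 0)
    (M : ℝ) (hM : 0 < M) (hbound : ∀ n, 1 ≤ n → essSupNorm01 (φ n) ≤ M)
    (nseq : ℕ → ℕ)
    (hnk : ∀ k, 2 ≤ k → m (k-1) < nseq k ∧ nseq k ≤ m k)
    (N l : ℕ) (hl : 1 ≤ l)
    (p : ℕ → ℝ → ℝ)
    (hp : ∀ k, l+1 ≤ k → k ≤ N →
      ∃ a : ℕ → ℝ, p k = fun x => ∑ j ∈ Finset.Icc 1 (m l), a j * φ j x) :
    (1/M) * ∑ k ∈ Finset.Icc (l+1) N, l1Norm01 (p k) ≤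
      essSupNorm01 (fun x => ∑ k ∈ Finset.Icc (l+1) N, p k x * φ (nseq k) x) := by
  have hm : MonotoneOn m (Set.Ici 1) := monotoneOn_nat_Ici_of_le_succ fun k hk => (hmono k hk).le
  have hn (t : ℕ) : m (l + t) < nseq (l + 1 + t) ∧ nseq (l + 1 + t) ≤ m (l + t + 1) := by
    obtain ⟨h₁, h₂⟩ := hnk (l + 1 + t) (by omega)
    rw [show l + 1 + t - 1 = l + t by omega] at h₁
    exact ⟨h₁, h₂.trans_eq (by rw [add_right_comm])⟩
  have hp' : ∀ t < N + 1 - (l + 1), p (l + 1 + t) ∈ gridStepFrom m l := fun t ht => by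
    obtain ⟨a, ha⟩ := hp (l + 1 + t) (by omega) (by omega)
    exact ha ▸ sum_mul_mem_gridStepFrom hm hstep hl a
  have key := sum_integral_abs_div_le_essSupNorm01 hm hm1 hstep
    (fun i j hi hj => intervalIntegral_zero_one_eq_integral_Icc _ ▸ horth i j hi hj) hφ1
    (fun k hk n hn j hj hjk =>
      intervalIntegral_zero_one_eq_integral_Icc _ ▸ horth2 k hk n hn j hj hjk)
    hM hbound hl hn hp'
  simp only [← Finset.Ico_add_one_right_eq_Icc, sum_Ico_eq_sum_range, mul_sum]
  simpa [l1Norm01, intervalIntegral_zero_one_eq_integral_Icc, div_eq_inv_mul] using key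

/-- Sidon-type inequality for discrete orthonormal systems. -/
theorem discrete_sidon (m : ℕ → ℕ) (hm1 : m 1 = 1) (hmono : ∀ k, 1 ≤ k → m k < m (k+1))
    (φ : ℕ → ℝ → ℝ) (hφ1 : ∀ x, φ 1 x = 1)
    (horth : ∀ i j, 1 ≤ i → 1 ≤ j →
      (∫ x in (0:ℝ)..1, φ i x * φ j x) = if i = j then 1 else 0)
    (hstep : ∀ k, 1 ≤ k → ∀ j, 1 ≤ j → j ≤ m k → ∀ i, 1 ≤ i → i ≤ m k →
      ∀ x ∈ Set.Ioo (((i:ℝ)-1)/(m k)) ((i:ℝ)/(m k)),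
        ∀ y ∈ Set.Ioo (((i:ℝ)-1)/(m k)) ((i:ℝ)/(m k)), φ j x = φ j y)
    (horth2 : ∀ k, 2 ≤ k → ∀ n, m k < n → ∀ j, 2 ≤ j → j ≤ m k →
      (∫ x in (0:ℝ)..1, (φ n x)^2 * φ j x) = 0)
    (M : ℝ) (hM : 0 < M) (hbound : ∀ n, 1 ≤ n → essSupNorm01 (φ n) ≤ M)
    (nseq : ℕ → ℕ) (hn1 : nseq 1 = 1)
    (hnk : ∀ k, 2 ≤ k → m (k-1) < nseq k ∧ nseq k ≤ m k)
    (N l : ℕ) (hl : 1 ≤ l) (hN : l + 1 ≤ N)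
    (p : ℕ → ℝ → ℝ)
    (hp : ∀ k, l+1 ≤ k → k ≤ N →
      ∃ a : ℕ → ℝ, p k = fun x => ∑ j ∈ Finset.Icc 1 (m l), a j * φ j x) :
    (1/M) * ∑ k ∈ Finset.Icc (l+1) N, l1Norm01 (p k) ≤
      essSupNorm01 (fun x => ∑ k ∈ Finset.Icc (l+1) N, p k x * φ (nseq k) x) :=
  discrete_sidon_general m hm1 hmono φ hφ1 horth hstep horth2 M hM hbound nseq hnk N l hl p hp
end
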